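/- arXiv:2006.00296 — 3 statements merged into one kernel-verified Lean document; each statement's English description precedes it below -/
import Mathlib

section
/- Let p, q, r be points in a metric space with |pq|, |pr|, |qr| > 0, and suppose q' lies on a geodesic segment from p to q, with q' → p. If there is a constant α such that |q'r| = |pr| − |pq'|·cos α + o(|pq'|) as q' → p, then the comparison angles ∠̃_0(q' p r) converge to α as q' → p (where cos ∠̃_0(q' p r) = (|pq'|² + |pr|² − |q'r|²)/(2|pq'||pr|)). -/
open Filter Topology Asymptotics Set

/-!
Write `|γ(s) r| = d - s cos α + e(s)` with `d = |pr|` and `e(s) = o(s)`. Factoring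
`d² - |γ(s) r|² = (s cos α - e(s)) (2d - s cos α + e(s))` turns the law-of-cosines quotient into
`s / (2d) + (cos α - e(s)/s) (2d - s cos α + e(s)) / (2d)`, which tends to `cos α` because
`e(s)/s → 0` and `e(s) → 0`. Continuity of `arccos` and `arccos (cos α) = α` on `[0, π]` finish.
-/

theorem tendsto_law_of_cosines_quotient_of_isLittleO {l : Filter ℝ} (hl : l ≤ 𝓝[≠] 0)
    {f : ℝ → ℝ} {d c : ℝ} (hd : d ≠ 0)
    (hf : (fun s => f s - (d - s * c)) =o[l] fun s => s) :
    Tendsto (fun s => (s ^ 2 + d ^ 2 - f s ^ 2) / (2 * s * d)) l (𝓝 c) := by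
  set e := fun s => f s - (d - s * c)
  have hs : Tendsto (fun s : ℝ => s) l (𝓝 0) :=
    tendsto_id.mono_left (hl.trans nhdsWithin_le_nhds)
  have he : Tendsto e l (𝓝 0) := hf.isBigO.trans_tendsto hs
  have hes : Tendsto (fun s => e s / s) l (𝓝 0) := hf.tendsto_div_nhds_zero
  have hlim : Tendsto (fun s => s / (2 * d) + (c - e s / s) * (2 * d - s * c + e s) / (2 * d))
      l (𝓝 (0 / (2 * d) + (c - 0) * (2 * d - 0 * c + 0) / (2 * d))) :=
    (hs.div_const _).add ((((tendsto_const_nhds.sub hes).mul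
      ((tendsto_const_nhds.sub (hs.mul_const c)).add he))).div_const _)
  have hc : 0 / (2 * d) + (c - 0) * (2 * d - 0 * c + 0) / (2 * d) = c := by
    field_simp
    ring
  rw [hc] at hlim
  refine hlim.congr' ?_
  filter_upwards [hl self_mem_nhdsWithin] with s (hs0 : s ≠ 0)
  have hfs : f s = d - s * c + e s := by simp only [e]; ring
  rw [hfs]
  field_simp
  ring

theorem comparison_angle_tendsto_of_first_variation_general
    {X : Type*} [MetricSpace X] (p r : X) (γ : ℝ → X) (α : ℝ)
    (hpr : 0 < dist p r)
    (hα : α ∈ Icc (0 : ℝ) Real.pi)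
    (hFV : (fun s => dist (γ s) r - (dist p r - s * Real.cos α))
      =o[nhdsWithin 0 (Ioi (0 : ℝ))] fun s => s) :
    Tendsto
      (fun s => Real.arccos ((s ^ 2 + dist p r ^ 2 - dist (γ s) r ^ 2) / (2 * s * dist p r)))
      (nhdsWithin 0 (Ioi (0 : ℝ))) (𝓝 α) := by
  have hcos := tendsto_law_of_cosines_quotient_of_isLittleO (nhdsGT_le_nhdsNE 0) hpr.ne' hFV
  have harccos := (Real.continuous_arccos.tendsto _).comp hcos
  rwa [Real.arccos_cos hα.1 hα.2] at harccos

/-- Lemma 1.2: if `γ` is a geodesic segment from `p` to `q`, and the first-variation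
expansion `|γ(s) r| = |pr| - s·cos α + o(s)` holds as `s → 0⁺`, then the Euclidean
comparison angles `∠̃₀ (γ(s)) p r` converge to `α` as `s → 0⁺`. -/
theorem comparison_angle_tendsto_of_first_variation
    {X : Type*} [MetricSpace X] (p q r : X) (γ : ℝ → X) (α : ℝ)
    (hpq : 0 < dist p q) (hpr : 0 < dist p r) (hqr : 0 < dist q r)
    (hγ0 : γ 0 = p) (hγ1 : γ (dist p q) = q)
    (hγ : ∀ s ∈ Icc (0 : ℝ) (dist p q), ∀ t ∈ Icc (0 : ℝ) (dist p q),
      dist (γ s) (γ t) = |s - t|)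
    (hα : α ∈ Icc (0 : ℝ) Real.pi)
    (hFV : (fun s => dist (γ s) r - (dist p r - s * Real.cos α))
      =o[nhdsWithin 0 (Ioi (0 : ℝ))] fun s => s) :
    Tendsto
      (fun s => Real.arccos ((s ^ 2 + dist p r ^ 2 - dist (γ s) r ^ 2) / (2 * s * dist p r)))
      (nhdsWithin 0 (Ioi (0 : ℝ))) (𝓝 α) :=
  comparison_angle_tendsto_of_first_variation_general p r γ α hpr hα hFV
end

section
/- Let a, b, c ∈ (0, π) with cos b ≥ cos a · cos c (i.e., comparison angle ∠̃₁ at the vertex between sides a and c is at most π/2) and suppose a + b ≥ π and a ≥ π/2. Then a = b = π/2 or c = π. Consequently, in an Alexandrov space of curvature ≥ 1, if a closed quasi-convex subset F contains two points p, p' with |qp| = dist(q,F) and |qp| + |qp'| = π for some q ∉ F, then either |pp'| = π or |qp| = |qp'| = π/2. -/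
/-- Equality case of Lemma 4.3, purely real-number version (here `a = |qp|`,
`b = |qp'|`, `c = |pp'|`): if `a, b, c ∈ (0, π]`, `a ≤ π/2` (from `|qF| ≤ π/2`),
`a + b = π`, and the comparison-angle bound `cos b ≥ cos a · cos c` holds
(i.e. `∠̃₁ q p p' ≤ π/2`), then either `c = π` (i.e. `|pp'| = π`) or
`a = b = π/2` (i.e. `|qp| = |qp'| = π/2`). -/
theorem equality_case_of_comparison
    (a b c : ℝ)
    (ha : 0 < a) (hb : 0 < b) (hc : 0 < c)
    (haπ : a ≤ Real.pi / 2) (hbπ : b ≤ Real.pi) (hcπ : c ≤ Real.pi)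
    (hab : a + b = Real.pi)
    (hcomp : Real.cos b ≥ Real.cos a * Real.cos c) :
    c = Real.pi ∨ (a = Real.pi / 2 ∧ b = Real.pi / 2) := by
  have hbeq : b = Real.pi - a := by linarith
  have hcb : Real.cos b = - Real.cos a := by rw [hbeq, Real.cos_pi_sub]
  have hkey : Real.cos a * (1 + Real.cos c) ≤ 0 := by
    rw [hcb] at hcomp; ring_nf; nlinarith
  have hca : 0 ≤ Real.cos a := Real.cos_nonneg_of_mem_Icc ⟨by linarith, haπ⟩
  have hcc : -1 ≤ Real.cos c := Real.neg_one_le_cos c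
  rcases eq_or_lt_of_le hca with h | h
  · right
    have : a = Real.pi / 2 := by
      by_contra hne
      have hlt : a < Real.pi / 2 := lt_of_le_of_ne haπ hne
      have := Real.cos_pos_of_mem_Ioo ⟨by linarith [Real.pi_pos], hlt⟩
      linarith [h.symm ▸ this]
    exact ⟨this, by linarith⟩
  · left
    have : Real.cos c = -1 := by nlinarith
    have hinj := Real.injOn_cos
    exact hinj ⟨by linarith, hcπ⟩ ⟨by positivity, le_refl _⟩
      (by rw [this, Real.cos_pi])
end

section
/- Let F be a subset of a metric space Y of diameter ≤ π, and let x₁, x₂ ∈ Y, a₁, a₂ ≥ 0. Suppose a₁cos|x₁ξ| + a₂cos|x₂ξ| ≤ 0 for all ξ ∈ F, and suppose there exist ξ₁, ξ₂ ∈ F with |ξ₁ξ₂| = π such that |x_iξ_i| + |x_iξ_{3−i}| = π for i = 1,2 and a₁cos|x₁ξ₁| + a₂cos|x₂ξ₁| = 0. If moreover for every ξ ∈ F: |ξξ₁| + |ξξ₂| = π, and the comparison angles satisfy ∠̃₁(x_i ξ_i ξ) ≤ π/2 for i = 1,2 (i.e., cos|x_iξ| ≥ cos|x_iξ_i|cos|ξ_iξ|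 whenever the relevant sines are positive), then a₁cos|x₁ξ| + a₂cos|x₂ξ| = 0 for all ξ ∈ F. -/
/-- Computational heart of (4.4.2): let `F` be a subset of a metric space `Y` of
diameter `≤ π`, `x₁, x₂ ∈ Y`, `a₁, a₂ ≥ 0` with `a₁cos|x₁ξ| + a₂cos|x₂ξ| ≤ 0` for all
`ξ ∈ F`. Suppose there are `ξ₁, ξ₂ ∈ F` with `|ξ₁ξ₂| = π`, `|x_iξ_i| + |x_iξ_{3−i}| = π`
(`i = 1, 2`), and `a₁cos|x₁ξ₁| + a₂cos|x₂ξ₁| = 0`; and that for every `ξ ∈ F` one has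
`|ξξ₁| + |ξξ₂| = π` and the comparison-angle bounds `∠̃₁(x_i ξ_i ξ) ≤ π/2`, i.e.
`cos|x_iξ| ≥ cos|x_iξ_i|·cos|ξ_iξ|`. Then `a₁cos|x₁ξ| + a₂cos|x₂ξ| = 0` for all `ξ ∈ F`. -/
theorem combination_vanishes_on_F
    {Y : Type*} [MetricSpace Y]
    (hdiam : ∀ x y : Y, dist x y ≤ Real.pi)
    (F : Set Y) (x₁ x₂ : Y) (a₁ a₂ : ℝ) (ha₁ : 0 ≤ a₁) (ha₂ : 0 ≤ a₂)
    (hnonpos : ∀ ξ ∈ F, a₁ * Real.cos (dist x₁ ξ) + a₂ * Real.cos (dist x₂ ξ) ≤ 0)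
    (ξ₁ : Y) (hξ₁ : ξ₁ ∈ F) (ξ₂ : Y) (hξ₂ : ξ₂ ∈ F)
    (hant : dist ξ₁ ξ₂ = Real.pi)
    (hsum₁ : dist x₁ ξ₁ + dist x₁ ξ₂ = Real.pi)
    (hsum₂ : dist x₂ ξ₂ + dist x₂ ξ₁ = Real.pi)
    (hcol : a₁ * Real.cos (dist x₁ ξ₁) + a₂ * Real.cos (dist x₂ ξ₁) = 0)
    (hξsum : ∀ ξ ∈ F, dist ξ ξ₁ + dist ξ ξ₂ = Real.pi)
    (hcomp₁ : ∀ ξ ∈ F, Real.cos (dist x₁ ξ) ≥ Real.cos (dist x₁ ξ₁) * Real.cos (dist ξ₁ ξ))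
    (hcomp₂ : ∀ ξ ∈ F, Real.cos (dist x₂ ξ) ≥ Real.cos (dist x₂ ξ₂) * Real.cos (dist ξ₂ ξ)) :
    ∀ ξ ∈ F, a₁ * Real.cos (dist x₁ ξ) + a₂ * Real.cos (dist x₂ ξ) = 0 := by
  intro ξ hξ
  have h1 := hcomp₁ ξ hξ
  have h2 := hcomp₂ ξ hξ
  have hs := hξsum ξ hξ
  have e1 : Real.cos (dist x₂ ξ₂) = -Real.cos (dist x₂ ξ₁) := by
    rw [show dist x₂ ξ₂ = Real.pi - dist x₂ ξ₁ by linarith, Real.cos_pi_sub]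
  have e2 : Real.cos (dist ξ₂ ξ) = -Real.cos (dist ξ₁ ξ) := by
    rw [show dist ξ₂ ξ = Real.pi - dist ξ₁ ξ by
      rw [dist_comm ξ₂ ξ, dist_comm ξ₁ ξ]; linarith, Real.cos_pi_sub]
  rw [e1, e2] at h2
  have key : (a₁ * Real.cos (dist x₁ ξ₁) + a₂ * Real.cos (dist x₂ ξ₁)) * Real.cos (dist ξ₁ ξ) = 0 := by
    rw [hcol]; ring
  have := hnonpos ξ hξ
  nlinarith [mul_le_mul_of_nonneg_left h1 ha₁, mul_le_mul_of_nonneg_left h2 ha₂, key]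
end
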